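/- arXiv:1311.3935 — 3 statements merged into one kernel-verified Lean document; each statement's English description precedes it below -/
import Mathlib

section
/- Let 0 < α < 1 and let w_n^(α) = (−1)^n·C(α,n) be the Grünwald weights. Then for every integer n ≥ 2: e^(−(α+1)²·(π²/6 − 5/4))·α·(1−α)·2^α / n^(α+1) < |w_n^(α)| < α·2^(α+1)/(n+1)^(α+1). -/
/-!
The recursion `w_{n+1} = w_n (1 - (α+1)/(n+1))` gives `|w_n| = α ∏_{k=2}^n (1 - β/k)` with
`β = α + 1 ∈ (1, 2)`. Comparing each factor with an exponential turns the product into harmonic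
sums: `1 - x < e^{-x}` together with `∑_{k=2}^n 1/k ≥ log ((n+1)/2)` gives the upper bound, and,
after splitting off the factor `1 - β/2 = (1 - α)/2`, the bound `1 - x ≥ e^{-x-x²}` on `[0, 2/3]`
together with `∑_{k=3}^n 1/k ≤ log (n/2)` and `∑_{k=3}^n 1/k² < ζ(2) - 1 - 1/4` gives the lower one.
-/

open Real Finset

/-- The Grünwald weights `w_n^(α) = (-1)^n * C(α, n)`. -/
noncomputable def grunwaldW (α : ℝ) (n : ℕ) : ℝ :=
  (-1) ^ n * (Real.Gamma (α + 1) / (Real.Gamma ((n : ℝ) + 1) * Real.Gamma (α - (n : ℝ) + 1)))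

section Weights

variable {α : ℝ}

-- `Real.Gamma` vanishes at its poles; `α ∉ ℤ` keeps every Gamma value in `grunwaldW α n` nonzero.
lemma grunwaldW_zero (hα : ∀ m : ℤ, α ≠ m) : grunwaldW α 0 = 1 := by
  have hΓ : Gamma (α + 1) ≠ 0 := Gamma_ne_zero fun m h => hα (-m - 1) (by push_cast; linarith)
  simp [grunwaldW, hΓ]

lemma grunwaldW_succ (hα : ∀ m : ℤ, α ≠ m) (n : ℕ) :
    grunwaldW α (n + 1) = grunwaldW α n * (1 - (α + 1) / (n + 1)) := by
  have hαn : α - n ≠ 0 := fun h => hα n (by push_cast; linarith)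
  have hΓαn : Gamma (α - n) ≠ 0 :=
    Gamma_ne_zero fun m h => hα (n - m) (by push_cast; linarith)
  have hΓn : Gamma ((n : ℝ) + 1) ≠ 0 := (Gamma_pos_of_pos (by positivity)).ne'
  simp only [grunwaldW, Nat.cast_add, Nat.cast_one]
  rw [Gamma_add_one (s := (n : ℝ) + 1) (by positivity), show α - (n + 1) + 1 = α - n by ring,
    Gamma_add_one hαn, pow_succ]
  field_simp
  ring

lemma grunwaldW_eq_prod (hα : ∀ m : ℤ, α ≠ m) (n : ℕ) :
    grunwaldW α n = ∏ k ∈ Icc 1 n, (1 - (α + 1) / k) := by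
  induction n with
  | zero => simp [grunwaldW_zero hα]
  | succ n ih =>
    rw [grunwaldW_succ hα, ih, prod_Icc_succ_top (by omega)]
    push_cast
    rfl

lemma abs_grunwaldW_eq (hα0 : 0 < α) (hα1 : α < 1) {n : ℕ} (hn : 1 ≤ n) :
    |grunwaldW α n| = α * ∏ k ∈ Icc 2 n, (1 - (α + 1) / k) := by
  have hα : ∀ m : ℤ, α ≠ m := by
    intro m h
    have : (0 : ℝ) < m ∧ (m : ℝ) < 1 := h ▸ ⟨hα0, hα1⟩
    norm_cast at this
    omega
  have hpos : 0 < ∏ k ∈ Icc 2 n, (1 - (α + 1) / k) := by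
    refine prod_pos fun k hk => ?_
    have hk : (2 : ℝ) ≤ k := by exact_mod_cast (mem_Icc.1 hk).1
    rw [sub_pos, div_lt_one (by linarith)]
    linarith
  rw [grunwaldW_eq_prod hα, ← insert_Icc_add_one_left_eq_Icc hn, prod_insert (by simp),
    one_add_one_eq_two, Nat.cast_one, div_one, show 1 - (α + 1) = -α by ring, neg_mul, abs_neg,
    abs_mul, abs_of_pos hα0, abs_of_pos hpos]

end Weights

lemma exp_neg_sub_sq_le_one_sub {x : ℝ} (h0 : 0 ≤ x) (h1 : x ≤ 2 / 3) :
    exp (-x - x ^ 2) ≤ 1 - x := by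
  rw [← le_log_iff_exp_le (by linarith)]
  -- `f` increases on `[0, 1/2]`, decreases after, and `f (2/3) = 10/9 - log 3 > 0`.
  set f : ℝ → ℝ := fun y => log (1 - y) + y + y ^ 2
  have hf : ∀ y < 1, HasDerivAt f (y * (1 - 2 * y) / (1 - y)) y := by
    intro y hy
    have := ((((hasDerivAt_id' y).const_sub 1).log (by linarith)).add (hasDerivAt_id' y)).add
      (hasDerivAt_pow 2 y)
    refine this.congr_deriv ?_
    have : 1 - y ≠ 0 := by linarith
    field_simp
    ring
  have hcont : ContinuousOn f (Set.Icc 0 (2 / 3)) := fun y hy =>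
    (hf y (by linarith [hy.2])).continuousAt.continuousWithinAt
  have hmono : MonotoneOn f (Set.Icc 0 (1 / 2)) := by
    refine monotoneOn_of_hasDerivWithinAt_nonneg (convex_Icc _ _)
      (hcont.mono (Set.Icc_subset_Icc le_rfl (by norm_num)))
      (fun y hy => (hf y ?_).hasDerivWithinAt) fun y hy => ?_ <;>
      rw [interior_Icc] at hy <;> obtain ⟨hy0, hy1⟩ := hy
    · linarith
    · exact div_nonneg (mul_nonneg hy0.le (by linarith)) (by linarith)
  have hanti : AntitoneOn f (Set.Icc (1 / 2) (2 / 3)) := by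
    refine antitoneOn_of_hasDerivWithinAt_nonpos (convex_Icc _ _)
      (hcont.mono (Set.Icc_subset_Icc (by norm_num) le_rfl))
      (fun y hy => (hf y ?_).hasDerivWithinAt) fun y hy => ?_ <;>
      rw [interior_Icc] at hy <;> obtain ⟨hy0, hy1⟩ := hy
    · linarith
    · exact div_nonpos_of_nonpos_of_nonneg
        (mul_nonpos_of_nonneg_of_nonpos (by linarith) (by linarith)) (by linarith)
  have hf0 : f 0 = 0 := by simp [f]
  have hf23 : 0 ≤ f (2 / 3) := by
    have : log (1 - 2 / 3 : ℝ) = -log 3 := by rw [← log_inv]; norm_num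
    simp only [f, this]
    linarith [log_three_lt_d9]
  suffices 0 ≤ f x by simp only [f] at this; linarith
  rcases le_total x (1 / 2) with hx | hx
  · exact hf0 ▸ hmono ⟨le_rfl, by norm_num⟩ ⟨h0, hx⟩ h0
  · exact hf23.trans (hanti ⟨hx, h1⟩ ⟨by norm_num, le_rfl⟩ h1)

lemma log_add_one_sub_log_le {x : ℝ} (hx : 0 < x) : log (x + 1) - log x ≤ 1 / x := by
  rw [← log_div (by positivity) hx.ne']
  calc log ((x + 1) / x) ≤ (x + 1) / x - 1 := log_le_sub_one_of_pos (by positivity)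
    _ = 1 / x := by field_simp; ring

lemma one_div_add_one_le_log_add_one_sub_log {x : ℝ} (hx : 0 < x) :
    1 / (x + 1) ≤ log (x + 1) - log x := by
  rw [← log_div (by positivity) hx.ne']
  calc 1 / (x + 1) = 1 - ((x + 1) / x)⁻¹ := by field_simp; ring
    _ ≤ log ((x + 1) / x) := one_sub_inv_le_log_of_pos (by positivity)

lemma log_sub_log_le_sum_Icc_inv {m n : ℕ} (hm : 0 < m) (hmn : m ≤ n) :
    log (n + 1) - log m ≤ ∑ k ∈ Icc m n, 1 / (k : ℝ) := by
  induction n, hmn using Nat.le_induction with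
  | base => simpa using log_add_one_sub_log_le (x := m) (by positivity)
  | succ n hmn ih =>
    rw [sum_Icc_succ_top (by omega)]
    have := log_add_one_sub_log_le (x := n + 1) (by positivity)
    push_cast
    linarith

lemma sum_Icc_inv_le_log_sub_log {m n : ℕ} (hm : 0 < m) (hmn : m ≤ n) :
    ∑ k ∈ Icc (m + 1) n, 1 / (k : ℝ) ≤ log n - log m := by
  induction n, hmn using Nat.le_induction with
  | base => simp
  | succ n hmn ih =>
    rw [sum_Icc_succ_top (by omega)]
    have := one_div_add_one_le_log_add_one_sub_log (x := n) (by exact_mod_cast hm.trans_le hmn)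
    push_cast
    linarith

lemma sum_Icc_three_inv_sq_lt {n : ℕ} (hn : 2 ≤ n) :
    ∑ k ∈ Icc 3 n, 1 / (k : ℝ) ^ 2 < π ^ 2 / 6 - 5 / 4 := by
  have hsum : ∑ k ∈ range (n + 2), 1 / (k : ℝ) ^ 2 ≤ π ^ 2 / 6 :=
    sum_le_hasSum _ (fun k _ => by positivity) hasSum_zeta_two
  rw [sum_range_succ, ← sum_range_add_sum_Ico _ (by omega : 3 ≤ n + 1),
    Ico_add_one_right_eq_Icc] at hsum
  norm_num [sum_range_succ] at hsum
  have : (0 : ℝ) < ((n : ℝ) + 1) ^ 2 := by positivity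
  simp only [one_div]
  linarith [inv_pos.2 this]

section Products

variable {β : ℝ} {m n : ℕ}

lemma prod_Icc_one_sub_div_lt_rpow (hβ : 0 < β) (hβm : β < m) (hmn : m ≤ n) :
    ∏ k ∈ Icc m n, (1 - β / k) < (m / (n + 1)) ^ β := by
  have hm : (0 : ℝ) < m := hβ.trans hβm
  calc ∏ k ∈ Icc m n, (1 - β / k) < ∏ k ∈ Icc m n, exp (-(β / k)) := by
        refine prod_lt_prod_of_nonempty (fun k hk => ?_) (fun k hk => one_sub_lt_exp_neg ?_)
          (nonempty_Icc.2 hmn) <;>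
          have hk : (m : ℝ) ≤ k := by exact_mod_cast (mem_Icc.1 hk).1
        · rw [sub_pos, div_lt_one (by linarith)]
          linarith
        · exact (div_pos hβ (by linarith)).ne'
    _ = exp (-(β * ∑ k ∈ Icc m n, 1 / (k : ℝ))) := by
        rw [← exp_sum, mul_sum, ← sum_neg_distrib]
        simp only [mul_one_div]
    _ ≤ exp (-(β * (log (n + 1) - log m))) := by
        gcongr
        exact log_sub_log_le_sum_Icc_inv (by exact_mod_cast hm) hmn
    _ = (m / (n + 1)) ^ β := by
        rw [div_rpow hm.le (by positivity), rpow_def_of_pos hm, rpow_def_of_pos (by positivity),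
          ← exp_sub]
        ring_nf

lemma exp_mul_rpow_le_prod_Icc_one_sub_div (hβ : 0 ≤ β) (hβm : β ≤ 2 / 3 * (m + 1))
    (hm : 0 < m) (hmn : m ≤ n) :
    exp (-β ^ 2 * ∑ k ∈ Icc (m + 1) n, 1 / (k : ℝ) ^ 2) * (m / n) ^ β ≤
      ∏ k ∈ Icc (m + 1) n, (1 - β / k) := by
  have hm' : (0 : ℝ) < m := by exact_mod_cast hm
  have hn : (0 : ℝ) < n := by exact_mod_cast hm.trans_le hmn
  calc exp (-β ^ 2 * ∑ k ∈ Icc (m + 1) n, 1 / (k : ℝ) ^ 2) * (m / n) ^ β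
      ≤ exp (-(β * ∑ k ∈ Icc (m + 1) n, 1 / (k : ℝ)) -
          β ^ 2 * ∑ k ∈ Icc (m + 1) n, 1 / (k : ℝ) ^ 2) := by
        rw [div_rpow hm'.le hn.le, rpow_def_of_pos hm', rpow_def_of_pos hn, ← exp_sub,
          ← exp_add]
        gcongr
        nlinarith [sum_Icc_inv_le_log_sub_log hm hmn]
    _ = ∏ k ∈ Icc (m + 1) n, exp (-(β / k) - (β / k) ^ 2) := by
        rw [← exp_sum, sum_sub_distrib, sum_neg_distrib, mul_sum, mul_sum]
        simp only [div_pow, mul_one_div]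
    _ ≤ ∏ k ∈ Icc (m + 1) n, (1 - β / k) := by
        refine prod_le_prod (fun _ _ => (exp_pos _).le) fun k hk => ?_
        have hk : (m : ℝ) + 1 ≤ k := by exact_mod_cast (mem_Icc.1 hk).1
        refine exp_neg_sub_sq_le_one_sub (by positivity) ?_
        rw [div_le_iff₀ (by linarith)]
        nlinarith

lemma lt_prod_Icc_two_one_sub_div (hβ0 : 0 < β) (hβ2 : β < 2) (hn : 2 ≤ n) :
    (1 - β / 2) * exp (-β ^ 2 * (π ^ 2 / 6 - 5 / 4)) * (2 / n) ^ β <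
      ∏ k ∈ Icc 2 n, (1 - β / k) := by
  have hsplit : ∏ k ∈ Icc 2 n, (1 - β / k) = (1 - β / 2) * ∏ k ∈ Icc 3 n, (1 - β / k) := by
    rw [← insert_Icc_add_one_left_eq_Icc hn, prod_insert (by simp)]
    rfl
  have hlower : exp (-β ^ 2 * ∑ k ∈ Icc 3 n, 1 / (k : ℝ) ^ 2) * (2 / n) ^ β ≤
      ∏ k ∈ Icc 3 n, (1 - β / k) := by
    exact_mod_cast exp_mul_rpow_le_prod_Icc_one_sub_div hβ0.le (by push_cast; linarith)
      two_pos hn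
  have hexp : exp (-β ^ 2 * (π ^ 2 / 6 - 5 / 4)) <
      exp (-β ^ 2 * ∑ k ∈ Icc 3 n, 1 / (k : ℝ) ^ 2) :=
    exp_lt_exp.2 (mul_lt_mul_of_neg_left (sum_Icc_three_inv_sq_lt hn) (by nlinarith))
  have hfirst : 0 < 1 - β / 2 := by linarith
  rw [hsplit, mul_assoc]
  exact mul_lt_mul_of_pos_left
    ((mul_lt_mul_of_pos_right hexp (by positivity)).trans_le hlower) hfirst

end Products

/-- upper and lower bounds for the Grünwald weights. -/
theorem grunwaldW_bounds (α : ℝ) (hα0 : 0 < α) (hα1 : α < 1) :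
    ∀ n : ℕ, 2 ≤ n →
      Real.exp (-(α + 1) ^ 2 * (Real.pi ^ 2 / 6 - 5 / 4)) *
          (α * (1 - α) * (2 : ℝ) ^ α) / (n : ℝ) ^ (α + 1) < |grunwaldW α n| ∧
      |grunwaldW α n| < α * (2 : ℝ) ^ (α + 1) / ((n : ℝ) + 1) ^ (α + 1) := by
  intro n hn
  have hn0 : (0 : ℝ) < n := by positivity
  rw [abs_grunwaldW_eq hα0 hα1 (by omega)]
  constructor
  · calc exp (-(α + 1) ^ 2 * (π ^ 2 / 6 - 5 / 4)) * (α * (1 - α) * 2 ^ α) / n ^ (α + 1)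
        = α * ((1 - (α + 1) / 2) * exp (-(α + 1) ^ 2 * (π ^ 2 / 6 - 5 / 4)) *
            (2 / n) ^ (α + 1)) := by
          rw [div_rpow zero_le_two hn0.le, rpow_add two_pos, rpow_one]
          field_simp
          ring
      _ < α * ∏ k ∈ Icc 2 n, (1 - (α + 1) / k) :=
          mul_lt_mul_of_pos_left (lt_prod_Icc_two_one_sub_div (by linarith) (by linarith) hn) hα0
  · calc α * ∏ k ∈ Icc 2 n, (1 - (α + 1) / k) < α * (2 / (n + 1)) ^ (α + 1) := by
          gcongr
          exact_mod_cast prod_Icc_one_sub_div_lt_rpow (by linarith) (by push_cast; linarith) hn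
      _ = α * 2 ^ (α + 1) / (n + 1) ^ (α + 1) := by
          rw [div_rpow zero_le_two (by positivity)]
          ring
end

section
/- Let 0 < α < 1, η > 0, N ≥ 2, and let A be the (N−1)×(N−1) real tridiagonal matrix with entries 2 on the main diagonal, −1 on the first diagonals directly above and below the main diagonal, and 0 elsewhere. Set P = I + (1 − α/2)·η·A and Q = I − (η/2)·A. Then P is invertible, and every eigenvalue μ of R = P⁻¹Q satisfies |μ| < 1; that is, the spectral radius of R is strictly less than 1. -/
/-!
The second-difference matrix `A` factors as `Bᵀ B` with `B` the forward-difference matrix, which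
has the partial-sum matrix as a left inverse; hence `A` is positive definite, and so is
`P = 1 + c A` for `c ≥ 0`. If `P⁻¹ Q v = μ v` with `v ≠ 0`, then `Q v = μ P v`, and pairing with
`v` gives `s - d a = μ (s + c a)` with `s = vᵀ v > 0`, `a = vᵀ A v > 0` and `d = η / 2`; since
`0 < d ≤ c`, this ratio lies in `(-1, 1)`.
-/

open Matrix

lemma abs_lt_one_of_sub_mul_eq_mul_add_mul {s a c d μ : ℝ} (hs : 0 < s) (ha : 0 < a) (hd : 0 < d)
    (hdc : d ≤ c) (h : s - d * a = μ * (s + c * a)) : |μ| < 1 := by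
  have hden : 0 < s + c * a := by nlinarith
  rw [abs_lt]
  constructor <;> nlinarith [mul_pos hd ha, mul_nonneg (sub_nonneg.2 hdc) ha.le]

namespace Matrix

variable (R : Type*) [Ring R]

def forwardDiff (n : ℕ) : Matrix (Fin (n + 1)) (Fin n) R :=
  of fun i j => (if i = j.castSucc then 1 else 0) - (if i = j.succ then 1 else 0)

def partialSum (n : ℕ) : Matrix (Fin n) (Fin (n + 1)) R :=
  of fun j i => if i ≤ j.castSucc then 1 else 0

lemma partialSum_mul_forwardDiff (n : ℕ) : partialSum R n * forwardDiff R n = 1 := by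
  ext j k
  simp only [mul_apply, partialSum, forwardDiff, of_apply, mul_sub, mul_ite, mul_one, mul_zero,
    Finset.sum_sub_distrib, Finset.sum_ite_eq', Finset.mem_univ, if_true, one_apply]
  simp only [Fin.le_def, Fin.ext_iff, Fin.val_castSucc, Fin.val_succ]
  split_ifs <;> first | omega | simp

lemma forwardDiff_mulVec_injective (n : ℕ) : Function.Injective (forwardDiff R n).mulVec :=
  Function.LeftInverse.injective (g := (partialSum R n).mulVec) fun v => by
    rw [mulVec_mulVec, partialSum_mul_forwardDiff, one_mulVec]

def secondDiff (n : ℕ) : Matrix (Fin n) (Fin n) R :=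
  of fun i j => if i = j then 2 else if (i : ℕ) + 1 = j ∨ (j : ℕ) + 1 = i then -1 else 0

lemma transpose_forwardDiff_mul_forwardDiff (n : ℕ) :
    (forwardDiff R n)ᵀ * forwardDiff R n = secondDiff R n := by
  ext i j
  simp only [mul_apply, transpose_apply, forwardDiff, secondDiff, of_apply, sub_mul, ite_mul,
    one_mul, zero_mul, Finset.sum_sub_distrib, Finset.sum_ite_eq', Finset.mem_univ, if_true]
  simp only [Fin.ext_iff, Fin.val_castSucc, Fin.val_succ]
  split_ifs <;> first | omega | norm_num

theorem posDef_secondDiff (n : ℕ) : (secondDiff ℝ n).PosDef := by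
  rw [← transpose_forwardDiff_mul_forwardDiff, ← conjTranspose_eq_transpose_of_trivial]
  exact PosDef.conjTranspose_mul_self _ (forwardDiff_mulVec_injective ℝ n)

variable {n : Type*} [DecidableEq n] {A : Matrix n n ℝ}

theorem PosDef.one_add_smul (hA : A.PosDef) {c : ℝ} (hc : 0 ≤ c) : (1 + c • A).PosDef :=
  PosDef.one.add_posSemidef (hA.posSemidef.smul hc)

variable [Fintype n]

theorem PosDef.abs_lt_one_of_mem_spectrum_inv_mul (hA : A.PosDef) {c d : ℝ} (hd : 0 < d)
    (hdc : d ≤ c) {μ : ℝ} (hμ : μ ∈ spectrum ℝ ((1 + c • A)⁻¹ * (1 - d • A))) : |μ| < 1 := by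
  have hP := hA.one_add_smul (hd.trans_le hdc).le
  rw [← spectrum_toLin', ← Module.End.hasEigenvalue_iff_mem_spectrum] at hμ
  obtain ⟨v, hv⟩ := hμ.exists_hasEigenvector
  have hQP : (1 - d • A) *ᵥ v = μ • ((1 + c • A) *ᵥ v) := by
    have := congrArg ((1 + c • A) *ᵥ ·) hv.apply_eq_smul
    simpa only [toLin'_apply, mulVec_mulVec, mulVec_smul,
      mul_nonsing_inv_cancel_left _ _ ((isUnit_iff_isUnit_det _).mp hP.isUnit)] using this
  have hs : 0 < star v ⬝ᵥ v := by simpa using PosDef.one.dotProduct_mulVec_pos hv.2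
  have ha : 0 < star v ⬝ᵥ (A *ᵥ v) := hA.dotProduct_mulVec_pos hv.2
  have hquad : star v ⬝ᵥ v - d * (star v ⬝ᵥ (A *ᵥ v)) =
      μ * (star v ⬝ᵥ v + c * (star v ⬝ᵥ (A *ᵥ v))) := by
    simpa only [sub_mulVec, add_mulVec, one_mulVec, smul_mulVec, dotProduct_sub, dotProduct_add,
      dotProduct_smul, smul_eq_mul] using congrArg (star v ⬝ᵥ ·) hQP
  exact abs_lt_one_of_sub_mul_eq_mul_add_mul hs ha hd hdc hquad

end Matrix

theorem spectral_radius_lt_one_general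
    (α η : ℝ) (N : ℕ) (hα1 : α < 1) (hη : 0 < η)
    (A : Matrix (Fin (N - 1)) (Fin (N - 1)) ℝ)
    (hA : ∀ i j : Fin (N - 1), A i j =
      if i = j then 2
      else if (i : ℕ) + 1 = (j : ℕ) ∨ (j : ℕ) + 1 = (i : ℕ) then -1
      else 0) :
    IsUnit (1 + ((1 - α / 2) * η) • A) ∧
    ∀ μ ∈ spectrum ℝ ((1 + ((1 - α / 2) * η) • A)⁻¹ * (1 - (η / 2) • A)),
      |μ| < 1 := by
  have hApos : A.PosDef := (ext hA : A = secondDiff ℝ (N - 1)) ▸ posDef_secondDiff (N - 1)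
  have hd : 0 < η / 2 := by positivity
  have hdc : η / 2 ≤ (1 - α / 2) * η := by nlinarith
  exact ⟨(hApos.one_add_smul (hd.trans_le hdc).le).isUnit,
    fun μ => hApos.abs_lt_one_of_mem_spectrum_inv_mul hd hdc⟩

/-- `P = I + (1 - α/2)·η·A` is invertible and the spectral radius of
`R = P⁻¹ Q` with `Q = I - (η/2)·A` is strictly less than `1`. -/
theorem spectral_radius_lt_one
    (α η : ℝ) (N : ℕ) (hα0 : 0 < α) (hα1 : α < 1) (hη : 0 < η) (hN : 2 ≤ N)
    (A : Matrix (Fin (N - 1)) (Fin (N - 1)) ℝ)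
    (hA : ∀ i j : Fin (N - 1), A i j =
      if i = j then 2
      else if (i : ℕ) + 1 = (j : ℕ) ∨ (j : ℕ) + 1 = (i : ℕ) then -1
      else 0) :
    IsUnit (1 + ((1 - α / 2) * η) • A) ∧
    ∀ μ ∈ spectrum ℝ ((1 + ((1 - α / 2) * η) • A)⁻¹ * (1 - (η / 2) • A)),
      |μ| < 1 :=
  spectral_radius_lt_one_general α η N hα1 hη A hA
end

section
/- Let R and S be square real matrices of the same size and let ‖·‖ be a submultiplicative matrix norm. If ‖Rⁿ‖ → 0 and ‖Sⁿ‖ → 0 as n → ∞, then there exists a positive integer J such that ‖R^k · S^(J−k)‖ < 1 for every integer k with 0 ≤ k ≤ J. -/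
/-!
The products `nrm (R ^ i) * nrm (S ^ j)` tend to `0` along the cofinite filter on `ℕ × ℕ`: when
`i` is large the first factor is small and the second is bounded, and symmetrically in `j`. So the
product is `< 1` off a finite set of pairs, and for `J` large the whole antidiagonal `i + j = J`
avoids that set; submultiplicativity finishes.
-/

open Filter Finset Topology

theorem tendsto_mul_fst_snd_cofinite_zero {ι κ α : Type*} [NonUnitalSeminormedRing α]
    {f : ι → α} {g : κ → α} (hf : Tendsto f cofinite (𝓝 0)) (hg : Tendsto g cofinite (𝓝 0)) :
    Tendsto (fun p : ι × κ => f p.1 * g p.2) cofinite (𝓝 0) := by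
  have hf_bdd : BddAbove (Set.range fun p : ι × κ => ‖f p.1‖) :=
    hf.norm.bddAbove_range_of_cofinite.mono (Set.range_comp_subset_range Prod.fst (‖f ·‖))
  have hg_bdd : BddAbove (Set.range fun p : ι × κ => ‖g p.2‖) :=
    hg.norm.bddAbove_range_of_cofinite.mono (Set.range_comp_subset_range Prod.snd (‖g ·‖))
  rw [← coprod_cofinite]
  refine Tendsto.sup ?_ ?_
  · exact (hf.comp tendsto_comap).zero_mul_isBoundedUnder_le hg_bdd.isBoundedUnder_of_range
  · exact isBoundedUnder_le_mul_tendsto_zero hf_bdd.isBoundedUnder_of_range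
      (hg.comp tendsto_comap)

theorem eventually_atTop_forall_mem_antidiagonal {P : ℕ × ℕ → Prop}
    (h : ∀ᶠ p in cofinite, P p) : ∀ᶠ n : ℕ in atTop, ∀ p ∈ antidiagonal n, P p := by
  obtain ⟨B, hB⟩ := (h.image fun p => p.1 + p.2).bddAbove
  filter_upwards [eventually_gt_atTop B] with n hn p hp
  by_contra hP
  exact (hB ⟨p, hP, mem_antidiagonal.1 hp⟩).not_gt hn

theorem exists_J_mixed_powers_norm_lt_one_general
    (m : ℕ) (R S : Matrix (Fin m) (Fin m) ℝ)
    (nrm : Matrix (Fin m) (Fin m) ℝ → ℝ)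
    (hsub : ∀ X Y, nrm (X * Y) ≤ nrm X * nrm Y)
    (hR : Filter.Tendsto (fun n : ℕ => nrm (R ^ n)) Filter.atTop (nhds 0))
    (hS : Filter.Tendsto (fun n : ℕ => nrm (S ^ n)) Filter.atTop (nhds 0)) :
    ∃ J : ℕ, 0 < J ∧ ∀ k : ℕ, k ≤ J → nrm (R ^ k * S ^ (J - k)) < 1 := by
  rw [← Nat.cofinite_eq_atTop] at hR hS
  have hsmall : ∀ᶠ p : ℕ × ℕ in cofinite, nrm (R ^ p.1) * nrm (S ^ p.2) < 1 :=
    (tendsto_mul_fst_snd_cofinite_zero hR hS).eventually (gt_mem_nhds one_pos)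
  obtain ⟨J, hJ, hJ_pos⟩ :=
    ((eventually_atTop_forall_mem_antidiagonal hsmall).and (eventually_gt_atTop 0)).exists
  refine ⟨J, hJ_pos, fun k hk => (hsub _ _).trans_lt (hJ (k, J - k) ?_)⟩
  exact mem_antidiagonal.2 (Nat.add_sub_cancel' hk)

/-- if `‖Rⁿ‖ → 0` and `‖Sⁿ‖ → 0` for a submultiplicative matrix norm,
then there is a positive integer `J` with `‖R^k S^(J-k)‖ < 1` for all `0 ≤ k ≤ J`. -/
theorem exists_J_mixed_powers_norm_lt_one
    (m : ℕ) (R S : Matrix (Fin m) (Fin m) ℝ)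
    (nrm : Matrix (Fin m) (Fin m) ℝ → ℝ)
    (hnonneg : ∀ X, 0 ≤ nrm X)
    (hsub : ∀ X Y, nrm (X * Y) ≤ nrm X * nrm Y)
    (hR : Filter.Tendsto (fun n : ℕ => nrm (R ^ n)) Filter.atTop (nhds 0))
    (hS : Filter.Tendsto (fun n : ℕ => nrm (S ^ n)) Filter.atTop (nhds 0)) :
    ∃ J : ℕ, 0 < J ∧ ∀ k : ℕ, k ≤ J → nrm (R ^ k * S ^ (J - k)) < 1 :=
  exists_J_mixed_powers_norm_lt_one_general m R S nrm hsub hR hS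
end
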